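/- Let {B_k} be a sequence of n×n column-stochastic matrices such that for each k, B_k has positive diagonal entries and B_k is aligned with a strongly connected directed graph G_k (i.e., [B_k]_{ji} > 0 whenever (i,j) is an edge of G_k or j = i, and [B_k]_{ji} = 0 otherwise), and every positive entry of B_k is at least b > 0. Define π_0 = (1/n)·1 and π_{k+1} = B_k π_k. Then [π_k]_i ≥ b^n / n for all i ∈ [n] and all k ≥ 0. -/
import Mathlib


open Finset

theorem pi_lower_bound (n : ℕ) (hn : 0 < n)
    (E : ℕ → Fin n → Fin n → Prop)
    (hconn : ∀ k i j, Relation.ReflTransGen (E k) i j)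
    (B : ℕ → Matrix (Fin n) (Fin n) ℝ)
    (b : ℝ) (hb : 0 < b)
    (hB_nonneg : ∀ k i j, 0 ≤ B k i j)
    (hB_col : ∀ k i, ∑ j, B k j i = 1)
    (hB_pos : ∀ k i j, (E k i j ∨ j = i) → b ≤ B k j i)
    (hB_zero : ∀ k i j, ¬(E k i j ∨ j = i) → B k j i = 0)
    (π : ℕ → Fin n → ℝ)
    (hπ0 : ∀ i, π 0 i = 1 / n)
    (hπ : ∀ k, π (k + 1) = (B k).mulVec (π k)) :
    ∀ k i, b ^ n / n ≤ π k i := by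
  have hn' : (0:ℝ) < n := by exact_mod_cast hn
  obtain ⟨i0⟩ : Nonempty (Fin n) := ⟨⟨0, hn⟩⟩
  have hb1 : b ≤ 1 := by
    calc b ≤ B 0 i0 i0 := hB_pos 0 i0 i0 (Or.inr rfl)
    _ ≤ ∑ j, B 0 j i0 := Finset.single_le_sum (fun j _ => hB_nonneg 0 j i0) (mem_univ i0)
    _ = 1 := hB_col 0 i0
  have hnonneg : ∀ k i, 0 ≤ π k i := by
    intro k
    induction k with
    | zero => intro i; rw [hπ0]; positivity
    | succ k ih =>
      intro i
      rw [hπ, Matrix.mulVec, dotProduct]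
      exact Finset.sum_nonneg fun j _ => mul_nonneg (hB_nonneg k i j) (ih j)
  have hsum : ∀ k, ∑ i, π k i = 1 := by
    intro k
    induction k with
    | zero =>
      simp only [hπ0]
      rw [Finset.sum_const, nsmul_eq_mul]
      simp
      field_simp
    | succ k ih =>
      simp only [hπ, Matrix.mulVec, dotProduct]
      rw [Finset.sum_comm]
      calc ∑ j, ∑ i, B k i j * π k j = ∑ j, (∑ i, B k i j) * π k j := by
            simp [Finset.sum_mul]
        _ = ∑ j, π k j := by
            refine Finset.sum_congr rfl fun j _ => ?_
            rw [hB_col k j, one_mul]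
        _ = 1 := ih
  have cross : ∀ k (S : Finset (Fin n)) (u v : Fin n), Relation.ReflTransGen (E k) u v →
      u ∉ S → v ∈ S → ∃ x, x ∉ S ∧ ∃ y ∈ S, E k x y := by
    intro k S u v h
    induction h with
    | refl => intro hu hv; exact absurd hv hu
    | @tail m c h' e ih =>
      intro hu hc
      by_cases hm : m ∈ S
      · exact ih hu hm
      · exact ⟨m, hm, c, hc, e⟩
  have key : ∀ k (S : Finset (Fin n)), b ^ (n - S.card) * S.card / n ≤ ∑ i ∈ S, π k i := by
    intro k
    induction k with
    | zero =>
      intro S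
      have h1 : ∑ i ∈ S, π 0 i = S.card / n := by
        rw [Finset.sum_congr rfl (fun i _ => hπ0 i), Finset.sum_const, nsmul_eq_mul]
        ring
      rw [h1]
      have hpow : b ^ (n - S.card) ≤ 1 := pow_le_one₀ hb.le hb1
      have hcard : (0:ℝ) ≤ S.card := Nat.cast_nonneg _
      calc b ^ (n - S.card) * S.card / n ≤ 1 * S.card / n := by gcongr
        _ = S.card / n := by ring
    | succ k ih =>
      intro S
      rcases eq_or_ne S univ with hSu | hSu
      · subst hSu
        rw [hsum (k+1)]
        simp only [Finset.card_univ, Fintype.card_fin, Nat.sub_self, pow_zero, one_mul]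
        rw [div_le_one hn']
      · rcases S.eq_empty_or_nonempty with hSe | ⟨v, hv⟩
        · subst hSe; simp
        · -- find a crossing edge
          obtain ⟨u, hu⟩ : ∃ u, u ∉ S := by
            by_contra h
            push_neg at h
            exact hSu (Finset.eq_univ_iff_forall.mpr h)
          obtain ⟨x, hx, y, hy, hxy⟩ := cross k S u v (hconn k u v) hu hv
          have hscard : S.card < n := by
            have := Finset.card_lt_card (Finset.ssubset_univ_iff.mpr hSu)
            simpa using this
          have hins : (insert x S).card = S.card + 1 := Finset.card_insert_of_notMem hx
          have step1 : ∑ i ∈ S, π (k+1) i = ∑ j, (∑ i ∈ S, B k i j) * π k j := by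
            simp only [hπ, Matrix.mulVec, dotProduct]
            rw [Finset.sum_comm]
            simp [Finset.sum_mul]
          have step2 : ∑ j ∈ insert x S, (∑ i ∈ S, B k i j) * π k j ≤
              ∑ j, (∑ i ∈ S, B k i j) * π k j := by
            apply Finset.sum_le_sum_of_subset_of_nonneg (Finset.subset_univ _)
            intro j _ _
            exact mul_nonneg (Finset.sum_nonneg fun i _ => hB_nonneg k i j) (hnonneg k j)
          have step3 : ∑ j ∈ insert x S, b * π k j ≤
              ∑ j ∈ insert x S, (∑ i ∈ S, B k i j) * π k j := by
            apply Finset.sum_le_sum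
            intro j hj
            apply mul_le_mul_of_nonneg_right _ (hnonneg k j)
            rcases Finset.mem_insert.mp hj with rfl | hjS
            · calc b ≤ B k y j := hB_pos k j y (Or.inl hxy)
                _ ≤ ∑ i ∈ S, B k i j :=
                  Finset.single_le_sum (fun i _ => hB_nonneg k i j) hy
            · calc b ≤ B k j j := hB_pos k j j (Or.inr rfl)
                _ ≤ ∑ i ∈ S, B k i j :=
                  Finset.single_le_sum (fun i _ => hB_nonneg k i j) hjS
          have step4 : b * (b ^ (n - (S.card + 1)) * (S.card + 1) / n) ≤
              ∑ j ∈ insert x S, b * π k j := by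
            rw [← Finset.mul_sum]
            apply mul_le_mul_of_nonneg_left _ hb.le
            have := ih (insert x S)
            rw [hins] at this
            simpa using this
          have hexp : b ^ (n - S.card) = b * b ^ (n - (S.card + 1)) := by
            have : n - S.card = (n - (S.card + 1)) + 1 := by omega
            rw [this, pow_succ]
            ring
          rw [step1, hexp]
          calc b * b ^ (n - (S.card + 1)) * S.card / n
              ≤ b * b ^ (n - (S.card + 1)) * (S.card + 1) / n := by
                gcongr
                push_cast
                linarith
            _ = b * (b ^ (n - (S.card + 1)) * (S.card + 1) / n) := by ring
            _ ≤ ∑ j ∈ insert x S, b * π k j := step4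
            _ ≤ ∑ j ∈ insert x S, (∑ i ∈ S, B k i j) * π k j := step3
            _ ≤ ∑ j, (∑ i ∈ S, B k i j) * π k j := step2
  intro k i
  have h1 := key k {i}
  simp only [Finset.card_singleton, Nat.cast_one, mul_one, Finset.sum_singleton] at h1
  have hexp : b ^ n ≤ b ^ (n - 1) := by
    nth_rewrite 1 [show n = (n - 1) + 1 from by omega]
    rw [pow_succ]
    nlinarith [pow_nonneg hb.le (n - 1)]
  calc b ^ n / n ≤ b ^ (n - 1) / n := by gcongr
    _ ≤ π k i := h1
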